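/- arXiv:1710.02183 — 3 statements merged into one kernel-verified Lean document; each statement's English description precedes it below -/
import Mathlib

section
/- In the Lie algebra of type G2 with highest root α̃, the q-analog of Kostant's weight multiplicity of the zero weight in the adjoint representation equals m_q(α̃, 0) = q + q⁵, matching Σ_i q^{e_i} for the exponents e1 = 1, e2 = 5 of G2. -/
namespace G2

/-- Weights for `G₂` written in coordinates with respect to the simple roots:
`(a, b)` stands for `a • α₁ + b • α₂`. -/
abbrev V := ℚ × ℚ

/-- The short simple root `α₁`. -/
def α1 : V := (1, 0)

/-- The long simple root `α₂`. -/
def α2 : V := (0, 1)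

/-- The pairing `⟨v, α₁∨⟩` of a weight with the coroot of `α₁`. -/
def pair1 (v : V) : ℚ := 2 * v.1 - 3 * v.2

/-- The pairing `⟨v, α₂∨⟩` of a weight with the coroot of `α₂`. -/
def pair2 (v : V) : ℚ := -v.1 + 2 * v.2

/-- The simple reflection corresponding to `α₁`, as a function. -/
def s1fun (v : V) : V := v - pair1 v • α1

/-- The simple reflection corresponding to `α₂`, as a function. -/
def s2fun (v : V) : V := v - pair2 v • α2

lemma s1fun_involutive : Function.Involutive s1fun := by
  intro v
  unfold s1fun pair1 α1
  apply Prod.ext <;> (simp; try ring)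

lemma s2fun_involutive : Function.Involutive s2fun := by
  intro v
  unfold s2fun pair2 α2
  apply Prod.ext <;> (simp; try ring)

/-- The simple reflection `s₁`. -/
def s1 : Equiv.Perm V := s1fun_involutive.toPerm

/-- The simple reflection `s₂`. -/
def s2 : Equiv.Perm V := s2fun_involutive.toPerm

/-- The Weyl group of `G₂`, generated by the simple reflections. -/
def W : Subgroup (Equiv.Perm V) := Subgroup.closure {s1, s2}

/-- The set of roots of `G₂`: the orbit of the simple roots under the Weyl group. -/
def Roots : Set V := {v | ∃ w ∈ W, v = w α1 ∨ v = w α2}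

/-- The positive roots: roots that are nonnegative combinations of the simple roots. -/
def PosRoots : Set V := {v ∈ Roots | 0 ≤ v.1 ∧ 0 ≤ v.2}

/-- The six positive roots of `G₂`, listed explicitly. -/
def posRoot : Fin 6 → V := ![(1,0),(0,1),(1,1),(2,1),(3,1),(3,2)]

/-- Kostant's partition function: the number of ways to write `ξ` as a nonnegative
integral combination of the positive roots of `G₂`. -/
noncomputable def kostant (ξ : V) : ℕ :=
  Set.ncard {f : Fin 6 → ℕ | ∑ i, (f i : ℚ) • posRoot i = ξ}

/-- The coefficient of `q^k` in the `q`-analog `℘_q(ξ)`: the number of ways to write `ξ`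
as a nonnegative integral combination of the positive roots of `G₂` using exactly `k`
roots counted with multiplicity. -/
noncomputable def kostantCount (k : ℕ) (ξ : V) : ℕ :=
  Set.ncard {f : Fin 6 → ℕ |
    (∑ i, (f i : ℚ) • posRoot i = ξ) ∧ ∑ i, f i = k}

/-- The length of a Weyl group element: the number of positive roots sent to
negative roots. -/
noncomputable def len (σ : Equiv.Perm V) : ℕ :=
  Set.ncard {v ∈ PosRoots | ¬ (0 ≤ (σ v).1 ∧ 0 ≤ (σ v).2)}

/-- The half-sum of the positive roots of `G₂`: `ρ = 5α₁ + 3α₂`. -/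
def ρ : V := (5, 3)

/-- The highest root of `G₂`: `α̃ = 3α₁ + 2α₂`. -/
def htilde : V := (3, 2)

end G2

namespace G2

lemma s1_apply (v : V) : s1 v = (3*v.2 - v.1, v.2) := by
  show s1fun v = _
  unfold s1fun pair1 α1
  apply Prod.ext <;> simp <;> ring

lemma s2_apply (v : V) : s2 v = (v.1, v.1 - v.2) := by
  show s2fun v = _
  unfold s2fun pair2 α2
  apply Prod.ext <;> simp <;> ring

/-- The rotation `s₁ s₂`. -/
def r : Equiv.Perm V := s1 * s2

lemma r_apply (v : V) : r v = (2*v.1 - 3*v.2, v.1 - v.2) := by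
  show s1 (s2 v) = _
  rw [s2_apply, s1_apply]
  apply Prod.ext <;> simp <;> ring

lemma hs1 : s1 * s1 = 1 := Equiv.ext fun v => s1fun_involutive v
lemma hs2 : s2 * s2 = 1 := Equiv.ext fun v => s2fun_involutive v


lemma hr6 : r ^ (6:ℕ) = 1 := by
  refine Equiv.ext fun v => ?_
  show r (r (r (r (r (r v))))) = v
  simp only [r_apply]
  refine Prod.ext ?_ ?_ <;> (show _ = _; push_cast; ring_nf)


lemma s1_inv : s1⁻¹ = s1 := by
  rw [← mul_eq_one_iff_inv_eq]; exact hs1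

lemma s2_inv : s2⁻¹ = s2 := by
  rw [← mul_eq_one_iff_inv_eq]; exact hs2

lemma conj_r : s1 * r * s1⁻¹ = r⁻¹ := by
  rw [s1_inv]
  show s1 * (s1 * s2) * s1 = (s1 * s2)⁻¹
  rw [mul_inv_rev, s1_inv, s2_inv, ← mul_assoc, hs1, one_mul]

lemma conj_rz (i : ℤ) : s1 * r ^ i * s1⁻¹ = r ^ (-i) := by
  have : (MulAut.conj s1) (r ^ i) = ((MulAut.conj s1) r) ^ i := map_zpow _ _ _
  simpa [MulAut.conj_apply, conj_r, zpow_neg] using this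

lemma r_pow_s1 (i : ℤ) : r ^ i * s1 = s1 * r ^ (-i) := by
  have h := conj_rz i
  rw [s1_inv] at h
  have h2 := congrArg (fun x => s1 * x) h
  simpa [← mul_assoc, hs1] using h2

lemma hr6z : r ^ (6:ℤ) = 1 := by
  rw [show ((6:ℤ)) = ((6:ℕ):ℤ) by norm_num, zpow_natCast, hr6]

/-- The twelve elements of the Weyl group. -/
def g : Fin 12 → Equiv.Perm V :=
  ![1, r, r^2, r^3, r^4, r^5, s1, s1*r, s1*r^2, s1*r^3, s1*r^4, s1*r^5]

lemma mem_range_g (σ : Equiv.Perm V) (h : ∃ i : ℤ, σ = r ^ i ∨ σ = s1 * r ^ i) :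
    σ ∈ Set.range g := by
  obtain ⟨i, h⟩ := h
  have key : ∃ n : Fin 6, r ^ i = r ^ (n : ℕ) := by
    refine ⟨⟨(i % 6).toNat, by omega⟩, ?_⟩
    have h1 : (((i % 6).toNat : ℕ) : ℤ) = i % 6 := Int.toNat_of_nonneg (by omega)
    have h2 : r ^ i = r ^ (6 * (i / 6) + i % 6) := by rw [Int.mul_ediv_add_emod]
    rw [h2, zpow_add, zpow_mul, hr6z, one_zpow, one_mul]
    conv_rhs => rw [← zpow_natCast r]
    exact congrArg (r ^ · : ℤ → _) h1.symm
  obtain ⟨n, hn⟩ := key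
  rcases h with h | h
  · fin_cases n
    · exact ⟨0, by rw [h, hn]; rfl⟩
    · exact ⟨1, by rw [h, hn]; rfl⟩
    · exact ⟨2, by rw [h, hn]; rfl⟩
    · exact ⟨3, by rw [h, hn]; rfl⟩
    · exact ⟨4, by rw [h, hn]; rfl⟩
    · exact ⟨5, by rw [h, hn]; rfl⟩
  · fin_cases n
    · exact ⟨6, by rw [h, hn]; rfl⟩
    · exact ⟨7, by rw [h, hn]; rfl⟩
    · exact ⟨8, by rw [h, hn]; rfl⟩
    · exact ⟨9, by rw [h, hn]; rfl⟩
    · exact ⟨10, by rw [h, hn]; rfl⟩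
    · exact ⟨11, by rw [h, hn]; rfl⟩

lemma W_eq : (W : Set (Equiv.Perm V)) = Set.range g := by
  apply Set.Subset.antisymm
  · intro σ hσ
    apply mem_range_g
    refine Subgroup.closure_induction ?_ ?_ ?_ ?_ hσ
    · rintro x (rfl | rfl)
      · exact ⟨0, Or.inr (by simp)⟩
      · refine ⟨1, Or.inr ?_⟩
        show s2 = s1 * r ^ (1:ℤ)
        rw [zpow_one]
        show s2 = s1 * (s1 * s2)
        rw [← mul_assoc, hs1, one_mul]
    · exact ⟨0, Or.inl (by simp)⟩
    · rintro x y _ _ ⟨i, hi | hi⟩ ⟨j, hj | hj⟩ <;> subst hi hj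
      · exact ⟨i + j, Or.inl (zpow_add r i j).symm⟩
      · refine ⟨-i + j, Or.inr ?_⟩
        rw [← mul_assoc, r_pow_s1, mul_assoc, ← zpow_add]
      · exact ⟨i + j, Or.inr (by rw [mul_assoc, ← zpow_add])⟩
      · refine ⟨-i + j, Or.inl ?_⟩
        have h1 : s1 * r ^ i * (s1 * r ^ j) = s1 * (r ^ i * s1) * r ^ j := by
          simp [mul_assoc]
        rw [h1, r_pow_s1, ← mul_assoc, hs1, one_mul, ← zpow_add]
    · rintro x _ ⟨i, hi | hi⟩ <;> subst hi
      · exact ⟨-i, Or.inl (by rw [← zpow_neg])⟩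
      · refine ⟨i, Or.inr ?_⟩
        rw [mul_inv_rev, s1_inv, ← zpow_neg, r_pow_s1, neg_neg]
  · rintro _ ⟨i, rfl⟩
    have hs1W : s1 ∈ W := Subgroup.subset_closure (Set.mem_insert _ _)
    have hs2W : s2 ∈ W := Subgroup.subset_closure (Set.mem_insert_of_mem _ rfl)
    have hrW : r ∈ W := mul_mem hs1W hs2W
    fin_cases i <;>
      simp only [g, Matrix.cons_val_zero, Matrix.cons_val_one, Matrix.head_cons,
        Matrix.cons_val_succ] <;>
      first
      | exact one_mem W
      | exact hrW
      | exact pow_mem hrW _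
      | exact hs1W
      | exact mul_mem hs1W hrW
      | exact mul_mem hs1W (pow_mem hrW _)


/-- The images of `α̃ + ρ = (8,5)` under the twelve Weyl group elements, minus `ρ`. -/
def val : Fin 12 → V :=
  ![(3,2),(-4,0),(-12,-5),(-13,-8),(-6,-6),(2,-1),(2,2),(3,0),(-4,-5),(-12,-8),(-13,-6),(-6,-1)]

lemma hval : ∀ i : Fin 12, g i (htilde + ρ) - ρ = val i := by
  have h85 : htilde + ρ = ((8:ℚ), (5:ℚ)) := by
    unfold htilde ρ; exact Prod.ext (by norm_num) (by norm_num)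
  intro i
  rw [show g i (htilde + ρ) - ρ = g i ((8:ℚ),(5:ℚ)) - ρ by rw [h85]]
  fin_cases i
  · show ((8:ℚ),(5:ℚ)) - ρ = ((3:ℚ), (2:ℚ))
    (try simp only [r_apply, s1_apply])
    unfold ρ
    (try norm_num [Prod.ext_iff])
  · show r (((8:ℚ),(5:ℚ))) - ρ = ((-4:ℚ), (0:ℚ))
    (try simp only [r_apply, s1_apply])
    unfold ρ
    (try norm_num [Prod.ext_iff])
  · show r (r (((8:ℚ),(5:ℚ)))) - ρ = ((-12:ℚ), (-5:ℚ))
    (try simp only [r_apply, s1_apply])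
    unfold ρ
    (try norm_num [Prod.ext_iff])
  · show r (r (r (((8:ℚ),(5:ℚ))))) - ρ = ((-13:ℚ), (-8:ℚ))
    (try simp only [r_apply, s1_apply])
    unfold ρ
    (try norm_num [Prod.ext_iff])
  · show r (r (r (r (((8:ℚ),(5:ℚ)))))) - ρ = ((-6:ℚ), (-6:ℚ))
    (try simp only [r_apply, s1_apply])
    unfold ρ
    (try norm_num [Prod.ext_iff])
  · show r (r (r (r (r (((8:ℚ),(5:ℚ))))))) - ρ = ((2:ℚ), (-1:ℚ))
    (try simp only [r_apply, s1_apply])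
    unfold ρ
    (try norm_num [Prod.ext_iff])
  · show s1 (((8:ℚ),(5:ℚ))) - ρ = ((2:ℚ), (2:ℚ))
    (try simp only [r_apply, s1_apply])
    unfold ρ
    (try norm_num [Prod.ext_iff])
  · show s1 (r (((8:ℚ),(5:ℚ)))) - ρ = ((3:ℚ), (0:ℚ))
    (try simp only [r_apply, s1_apply])
    unfold ρ
    (try norm_num [Prod.ext_iff])
  · show s1 (r (r (((8:ℚ),(5:ℚ))))) - ρ = ((-4:ℚ), (-5:ℚ))
    (try simp only [r_apply, s1_apply])
    unfold ρ
    (try norm_num [Prod.ext_iff])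
  · show s1 (r (r (r (((8:ℚ),(5:ℚ)))))) - ρ = ((-12:ℚ), (-8:ℚ))
    (try simp only [r_apply, s1_apply])
    unfold ρ
    (try norm_num [Prod.ext_iff])
  · show s1 (r (r (r (r (((8:ℚ),(5:ℚ))))))) - ρ = ((-13:ℚ), (-6:ℚ))
    (try simp only [r_apply, s1_apply])
    unfold ρ
    (try norm_num [Prod.ext_iff])
  · show s1 (r (r (r (r (r (((8:ℚ),(5:ℚ)))))))) - ρ = ((-6:ℚ), (-1:ℚ))
    (try simp only [r_apply, s1_apply])
    unfold ρ
    (try norm_num [Prod.ext_iff])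

lemma g_inj : Function.Injective g := by
  have hv : Function.Injective val := by decide
  intro i j h
  exact hv (by rw [← hval i, ← hval j, h])


lemma posRoot_0 : posRoot 0 = ((1:ℚ), (0:ℚ)) := rfl
lemma posRoot_1 : posRoot 1 = ((0:ℚ), (1:ℚ)) := rfl
lemma posRoot_2 : posRoot 2 = ((1:ℚ), (1:ℚ)) := rfl
lemma posRoot_3 : posRoot 3 = ((2:ℚ), (1:ℚ)) := rfl
lemma posRoot_4 : posRoot 4 = ((3:ℚ), (1:ℚ)) := rfl
lemma posRoot_5 : posRoot 5 = ((3:ℚ), (2:ℚ)) := rfl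

lemma sum_eq (f : Fin 6 → ℕ) : ∑ i, (f i : ℚ) • posRoot i =
    (((f 0 + f 2 + 2*f 3 + 3*f 4 + 3*f 5 : ℕ) : ℚ), ((f 1 + f 2 + f 3 + f 4 + 2*f 5 : ℕ) : ℚ)) := by
  simp only [Fin.sum_univ_six, posRoot_0, posRoot_1, posRoot_2, posRoot_3, posRoot_4,
    posRoot_5, Prod.smul_mk, smul_eq_mul, Prod.mk_add_mk, Prod.mk.injEq]
  constructor <;> (push_cast; ring)

lemma kostantCount_eq_zero (k : ℕ) (ξ : V) (h : ξ.1 < 0 ∨ ξ.2 < 0) :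
    kostantCount k ξ = 0 := by
  unfold kostantCount
  convert Set.ncard_empty (Fin 6 → ℕ)
  ext f
  simp only [Set.mem_setOf_eq, Set.mem_empty_iff_false, iff_false, not_and]
  intro hf
  rw [sum_eq] at hf
  rcases h with h | h
  · have h2 : ξ.1 = ((f 0 + f 2 + 2*f 3 + 3*f 4 + 3*f 5 : ℕ) : ℚ) := by rw [← hf]
    rw [h2] at h
    exact absurd h (not_lt.mpr (Nat.cast_nonneg _))
  · have h2 : ξ.2 = ((f 1 + f 2 + f 3 + f 4 + 2*f 5 : ℕ) : ℚ) := by rw [← hf]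
    rw [h2] at h
    exact absurd h (not_lt.mpr (Nat.cast_nonneg _))

lemma funext_vec {f : Fin 6 → ℕ} {a b c d e p : ℕ}
    (h : f 0 = a ∧ f 1 = b ∧ f 2 = c ∧ f 3 = d ∧ f 4 = e ∧ f 5 = p) :
    f = ![a,b,c,d,e,p] := by
  obtain ⟨h0,h1,h2,h3,h4,h5⟩ := h
  funext j
  fin_cases j <;> simpa

lemma mem_iff (f : Fin 6 → ℕ) (k a b : ℕ) :
    ((∑ i, (f i : ℚ) • posRoot i = ((a : ℚ), (b : ℚ))) ∧ ∑ i, f i = k) ↔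
    ((f 0 + f 2 + 2*f 3 + 3*f 4 + 3*f 5 = a ∧ f 1 + f 2 + f 3 + f 4 + 2*f 5 = b) ∧
      f 0 + f 1 + f 2 + f 3 + f 4 + f 5 = k) := by
  rw [sum_eq, Prod.mk.injEq, Fin.sum_univ_six, Nat.cast_inj, Nat.cast_inj]


lemma kc32 (k : ℕ) : kostantCount k ((3:ℚ), (2:ℚ)) = if k = 1 then 1 else if k = 2 then 2 else if k = 3 then 2 else if k = 4 then 1 else if k = 5 then 1 else 0 := by
  unfold kostantCount
  have hs : {f : Fin 6 → ℕ | (∑ i, (f i : ℚ) • posRoot i = ((3:ℚ),(2:ℚ))) ∧ ∑ i, f i = k} =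
      {f : Fin 6 → ℕ | (f 0 + f 2 + 2*f 3 + 3*f 4 + 3*f 5 = 3 ∧ f 1 + f 2 + f 3 + f 4 + 2*f 5 = 2)
        ∧ f 0 + f 1 + f 2 + f 3 + f 4 + f 5 = k} := by
    ext f
    have h := mem_iff f k 3 2
    simp only [Set.mem_setOf_eq]
    rw [← h]
    norm_num
  rw [hs]
  rcases Nat.lt_or_ge k 6 with hk | hk
  · interval_cases k
    · have hemp : {f : Fin 6 → ℕ | (f 0 + f 2 + 2*f 3 + 3*f 4 + 3*f 5 = 3 ∧ f 1 + f 2 + f 3 + f 4 + 2*f 5 = 2)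
          ∧ f 0 + f 1 + f 2 + f 3 + f 4 + f 5 = 0} = (∅ : Set (Fin 6 → ℕ)) := by
        ext f
        simp only [Set.mem_setOf_eq, Set.mem_empty_iff_false, iff_false]
        rintro ⟨⟨h1, h2⟩, h3⟩
        omega
      rw [hemp, Set.ncard_empty]
      norm_num
    · have hone : {f : Fin 6 → ℕ | (f 0 + f 2 + 2*f 3 + 3*f 4 + 3*f 5 = 3 ∧ f 1 + f 2 + f 3 + f 4 + 2*f 5 = 2)
          ∧ f 0 + f 1 + f 2 + f 3 + f 4 + f 5 = 1} = {![0,0,0,0,0,1]} := by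
        ext f
        simp only [Set.mem_setOf_eq, Set.mem_singleton_iff]
        constructor
        · rintro ⟨⟨h1, h2⟩, h3⟩
          refine funext_vec ?_
          first
            | omega
            | (have hb4 : f 4 ≤ 1 := by omega
               have hb5 : f 5 ≤ 1 := by omega
               interval_cases hc4 : f 4 <;> interval_cases hc5 : f 5 <;> omega)
        · rintro rfl
          refine ⟨⟨?_, ?_⟩, ?_⟩ <;> decide
      rw [hone, Set.ncard_singleton]
      norm_num
    · have hone : {f : Fin 6 → ℕ | (f 0 + f 2 + 2*f 3 + 3*f 4 + 3*f 5 = 3 ∧ f 1 + f 2 + f 3 + f 4 + 2*f 5 = 2)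
          ∧ f 0 + f 1 + f 2 + f 3 + f 4 + f 5 = 2} = {![0,1,0,0,1,0], ![0,0,1,1,0,0]} := by
        ext f
        simp only [Set.mem_setOf_eq, Set.mem_insert_iff, Set.mem_singleton_iff]
        constructor
        · rintro ⟨⟨h1, h2⟩, h3⟩
          have hd : (f 0 = 0 ∧ f 1 = 1 ∧ f 2 = 0 ∧ f 3 = 0 ∧ f 4 = 1 ∧ f 5 = 0) ∨ (f 0 = 0 ∧ f 1 = 0 ∧ f 2 = 1 ∧ f 3 = 1 ∧ f 4 = 0 ∧ f 5 = 0) := by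
            first
            | omega
            | (have hb4 : f 4 ≤ 1 := by omega
               have hb5 : f 5 ≤ 1 := by omega
               interval_cases hc4 : f 4 <;> interval_cases hc5 : f 5 <;> omega)
          rcases hd with hd | hd
          · exact Or.inl (funext_vec hd)
          · exact Or.inr (funext_vec hd)
        · rintro (rfl | rfl) <;> refine ⟨⟨?_, ?_⟩, ?_⟩ <;> decide
      rw [hone, Set.ncard_pair (by decide)]
      norm_num
    · have hone : {f : Fin 6 → ℕ | (f 0 + f 2 + 2*f 3 + 3*f 4 + 3*f 5 = 3 ∧ f 1 + f 2 + f 3 + f 4 + 2*f 5 = 2)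
          ∧ f 0 + f 1 + f 2 + f 3 + f 4 + f 5 = 3} = {![1,1,0,1,0,0], ![1,0,2,0,0,0]} := by
        ext f
        simp only [Set.mem_setOf_eq, Set.mem_insert_iff, Set.mem_singleton_iff]
        constructor
        · rintro ⟨⟨h1, h2⟩, h3⟩
          have hd : (f 0 = 1 ∧ f 1 = 1 ∧ f 2 = 0 ∧ f 3 = 1 ∧ f 4 = 0 ∧ f 5 = 0) ∨ (f 0 = 1 ∧ f 1 = 0 ∧ f 2 = 2 ∧ f 3 = 0 ∧ f 4 = 0 ∧ f 5 = 0) := by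
            first
            | omega
            | (have hb4 : f 4 ≤ 1 := by omega
               have hb5 : f 5 ≤ 1 := by omega
               interval_cases hc4 : f 4 <;> interval_cases hc5 : f 5 <;> omega)
          rcases hd with hd | hd
          · exact Or.inl (funext_vec hd)
          · exact Or.inr (funext_vec hd)
        · rintro (rfl | rfl) <;> refine ⟨⟨?_, ?_⟩, ?_⟩ <;> decide
      rw [hone, Set.ncard_pair (by decide)]
      norm_num
    · have hone : {f : Fin 6 → ℕ | (f 0 + f 2 + 2*f 3 + 3*f 4 + 3*f 5 = 3 ∧ f 1 + f 2 + f 3 + f 4 + 2*f 5 = 2)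
          ∧ f 0 + f 1 + f 2 + f 3 + f 4 + f 5 = 4} = {![2,1,1,0,0,0]} := by
        ext f
        simp only [Set.mem_setOf_eq, Set.mem_singleton_iff]
        constructor
        · rintro ⟨⟨h1, h2⟩, h3⟩
          refine funext_vec ?_
          first
            | omega
            | (have hb4 : f 4 ≤ 1 := by omega
               have hb5 : f 5 ≤ 1 := by omega
               interval_cases hc4 : f 4 <;> interval_cases hc5 : f 5 <;> omega)
        · rintro rfl
          refine ⟨⟨?_, ?_⟩, ?_⟩ <;> decide
      rw [hone, Set.ncard_singleton]
      norm_num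
    · have hone : {f : Fin 6 → ℕ | (f 0 + f 2 + 2*f 3 + 3*f 4 + 3*f 5 = 3 ∧ f 1 + f 2 + f 3 + f 4 + 2*f 5 = 2)
          ∧ f 0 + f 1 + f 2 + f 3 + f 4 + f 5 = 5} = {![3,2,0,0,0,0]} := by
        ext f
        simp only [Set.mem_setOf_eq, Set.mem_singleton_iff]
        constructor
        · rintro ⟨⟨h1, h2⟩, h3⟩
          refine funext_vec ?_
          first
            | omega
            | (have hb4 : f 4 ≤ 1 := by omega
               have hb5 : f 5 ≤ 1 := by omega
               interval_cases hc4 : f 4 <;> interval_cases hc5 : f 5 <;> omega)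
        · rintro rfl
          refine ⟨⟨?_, ?_⟩, ?_⟩ <;> decide
      rw [hone, Set.ncard_singleton]
      norm_num
  · rw [if_neg (by omega : ¬ k = 1), if_neg (by omega : ¬ k = 2), if_neg (by omega : ¬ k = 3), if_neg (by omega : ¬ k = 4), if_neg (by omega : ¬ k = 5)]
    have hemp : {f : Fin 6 → ℕ | (f 0 + f 2 + 2*f 3 + 3*f 4 + 3*f 5 = 3 ∧ f 1 + f 2 + f 3 + f 4 + 2*f 5 = 2)
          ∧ f 0 + f 1 + f 2 + f 3 + f 4 + f 5 = k} = (∅ : Set (Fin 6 → ℕ)) := by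
      ext f
      simp only [Set.mem_setOf_eq, Set.mem_empty_iff_false, iff_false]
      rintro ⟨⟨h1, h2⟩, h3⟩
      omega
    rw [hemp, Set.ncard_empty]

lemma kc22 (k : ℕ) : kostantCount k ((2:ℚ), (2:ℚ)) = if k = 2 then 2 else if k = 3 then 1 else if k = 4 then 1 else 0 := by
  unfold kostantCount
  have hs : {f : Fin 6 → ℕ | (∑ i, (f i : ℚ) • posRoot i = ((2:ℚ),(2:ℚ))) ∧ ∑ i, f i = k} =
      {f : Fin 6 → ℕ | (f 0 + f 2 + 2*f 3 + 3*f 4 + 3*f 5 = 2 ∧ f 1 + f 2 + f 3 + f 4 + 2*f 5 = 2)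
        ∧ f 0 + f 1 + f 2 + f 3 + f 4 + f 5 = k} := by
    ext f
    have h := mem_iff f k 2 2
    simp only [Set.mem_setOf_eq]
    rw [← h]
    norm_num
  rw [hs]
  rcases Nat.lt_or_ge k 6 with hk | hk
  · interval_cases k
    · have hemp : {f : Fin 6 → ℕ | (f 0 + f 2 + 2*f 3 + 3*f 4 + 3*f 5 = 2 ∧ f 1 + f 2 + f 3 + f 4 + 2*f 5 = 2)
          ∧ f 0 + f 1 + f 2 + f 3 + f 4 + f 5 = 0} = (∅ : Set (Fin 6 → ℕ)) := by
        ext f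
        simp only [Set.mem_setOf_eq, Set.mem_empty_iff_false, iff_false]
        rintro ⟨⟨h1, h2⟩, h3⟩
        omega
      rw [hemp, Set.ncard_empty]
      norm_num
    · have hemp : {f : Fin 6 → ℕ | (f 0 + f 2 + 2*f 3 + 3*f 4 + 3*f 5 = 2 ∧ f 1 + f 2 + f 3 + f 4 + 2*f 5 = 2)
          ∧ f 0 + f 1 + f 2 + f 3 + f 4 + f 5 = 1} = (∅ : Set (Fin 6 → ℕ)) := by
        ext f
        simp only [Set.mem_setOf_eq, Set.mem_empty_iff_false, iff_false]
        rintro ⟨⟨h1, h2⟩, h3⟩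
        omega
      rw [hemp, Set.ncard_empty]
      norm_num
    · have hone : {f : Fin 6 → ℕ | (f 0 + f 2 + 2*f 3 + 3*f 4 + 3*f 5 = 2 ∧ f 1 + f 2 + f 3 + f 4 + 2*f 5 = 2)
          ∧ f 0 + f 1 + f 2 + f 3 + f 4 + f 5 = 2} = {![0,0,2,0,0,0], ![0,1,0,1,0,0]} := by
        ext f
        simp only [Set.mem_setOf_eq, Set.mem_insert_iff, Set.mem_singleton_iff]
        constructor
        · rintro ⟨⟨h1, h2⟩, h3⟩
          have hd : (f 0 = 0 ∧ f 1 = 0 ∧ f 2 = 2 ∧ f 3 = 0 ∧ f 4 = 0 ∧ f 5 = 0) ∨ (f 0 = 0 ∧ f 1 = 1 ∧ f 2 = 0 ∧ f 3 = 1 ∧ f 4 = 0 ∧ f 5 = 0) := by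
            first
            | omega
            | (have hb4 : f 4 ≤ 1 := by omega
               have hb5 : f 5 ≤ 1 := by omega
               interval_cases hc4 : f 4 <;> interval_cases hc5 : f 5 <;> omega)
          rcases hd with hd | hd
          · exact Or.inl (funext_vec hd)
          · exact Or.inr (funext_vec hd)
        · rintro (rfl | rfl) <;> refine ⟨⟨?_, ?_⟩, ?_⟩ <;> decide
      rw [hone, Set.ncard_pair (by decide)]
      norm_num
    · have hone : {f : Fin 6 → ℕ | (f 0 + f 2 + 2*f 3 + 3*f 4 + 3*f 5 = 2 ∧ f 1 + f 2 + f 3 + f 4 + 2*f 5 = 2)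
          ∧ f 0 + f 1 + f 2 + f 3 + f 4 + f 5 = 3} = {![1,1,1,0,0,0]} := by
        ext f
        simp only [Set.mem_setOf_eq, Set.mem_singleton_iff]
        constructor
        · rintro ⟨⟨h1, h2⟩, h3⟩
          refine funext_vec ?_
          first
            | omega
            | (have hb4 : f 4 ≤ 1 := by omega
               have hb5 : f 5 ≤ 1 := by omega
               interval_cases hc4 : f 4 <;> interval_cases hc5 : f 5 <;> omega)
        · rintro rfl
          refine ⟨⟨?_, ?_⟩, ?_⟩ <;> decide
      rw [hone, Set.ncard_singleton]
      norm_num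
    · have hone : {f : Fin 6 → ℕ | (f 0 + f 2 + 2*f 3 + 3*f 4 + 3*f 5 = 2 ∧ f 1 + f 2 + f 3 + f 4 + 2*f 5 = 2)
          ∧ f 0 + f 1 + f 2 + f 3 + f 4 + f 5 = 4} = {![2,2,0,0,0,0]} := by
        ext f
        simp only [Set.mem_setOf_eq, Set.mem_singleton_iff]
        constructor
        · rintro ⟨⟨h1, h2⟩, h3⟩
          refine funext_vec ?_
          first
            | omega
            | (have hb4 : f 4 ≤ 1 := by omega
               have hb5 : f 5 ≤ 1 := by omega
               interval_cases hc4 : f 4 <;> interval_cases hc5 : f 5 <;> omega)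
        · rintro rfl
          refine ⟨⟨?_, ?_⟩, ?_⟩ <;> decide
      rw [hone, Set.ncard_singleton]
      norm_num
    · have hemp : {f : Fin 6 → ℕ | (f 0 + f 2 + 2*f 3 + 3*f 4 + 3*f 5 = 2 ∧ f 1 + f 2 + f 3 + f 4 + 2*f 5 = 2)
          ∧ f 0 + f 1 + f 2 + f 3 + f 4 + f 5 = 5} = (∅ : Set (Fin 6 → ℕ)) := by
        ext f
        simp only [Set.mem_setOf_eq, Set.mem_empty_iff_false, iff_false]
        rintro ⟨⟨h1, h2⟩, h3⟩
        omega
      rw [hemp, Set.ncard_empty]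
      norm_num
  · rw [if_neg (by omega : ¬ k = 2), if_neg (by omega : ¬ k = 3), if_neg (by omega : ¬ k = 4)]
    have hemp : {f : Fin 6 → ℕ | (f 0 + f 2 + 2*f 3 + 3*f 4 + 3*f 5 = 2 ∧ f 1 + f 2 + f 3 + f 4 + 2*f 5 = 2)
          ∧ f 0 + f 1 + f 2 + f 3 + f 4 + f 5 = k} = (∅ : Set (Fin 6 → ℕ)) := by
      ext f
      simp only [Set.mem_setOf_eq, Set.mem_empty_iff_false, iff_false]
      rintro ⟨⟨h1, h2⟩, h3⟩
      omega
    rw [hemp, Set.ncard_empty]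

lemma kc30 (k : ℕ) : kostantCount k ((3:ℚ), (0:ℚ)) = if k = 3 then 1 else 0 := by
  unfold kostantCount
  have hs : {f : Fin 6 → ℕ | (∑ i, (f i : ℚ) • posRoot i = ((3:ℚ),(0:ℚ))) ∧ ∑ i, f i = k} =
      {f : Fin 6 → ℕ | (f 0 + f 2 + 2*f 3 + 3*f 4 + 3*f 5 = 3 ∧ f 1 + f 2 + f 3 + f 4 + 2*f 5 = 0)
        ∧ f 0 + f 1 + f 2 + f 3 + f 4 + f 5 = k} := by
    ext f
    have h := mem_iff f k 3 0
    simp only [Set.mem_setOf_eq]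
    rw [← h]
    norm_num
  rw [hs]
  rcases Nat.lt_or_ge k 6 with hk | hk
  · interval_cases k
    · have hemp : {f : Fin 6 → ℕ | (f 0 + f 2 + 2*f 3 + 3*f 4 + 3*f 5 = 3 ∧ f 1 + f 2 + f 3 + f 4 + 2*f 5 = 0)
          ∧ f 0 + f 1 + f 2 + f 3 + f 4 + f 5 = 0} = (∅ : Set (Fin 6 → ℕ)) := by
        ext f
        simp only [Set.mem_setOf_eq, Set.mem_empty_iff_false, iff_false]
        rintro ⟨⟨h1, h2⟩, h3⟩
        omega
      rw [hemp, Set.ncard_empty]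
      norm_num
    · have hemp : {f : Fin 6 → ℕ | (f 0 + f 2 + 2*f 3 + 3*f 4 + 3*f 5 = 3 ∧ f 1 + f 2 + f 3 + f 4 + 2*f 5 = 0)
          ∧ f 0 + f 1 + f 2 + f 3 + f 4 + f 5 = 1} = (∅ : Set (Fin 6 → ℕ)) := by
        ext f
        simp only [Set.mem_setOf_eq, Set.mem_empty_iff_false, iff_false]
        rintro ⟨⟨h1, h2⟩, h3⟩
        omega
      rw [hemp, Set.ncard_empty]
      norm_num
    · have hemp : {f : Fin 6 → ℕ | (f 0 + f 2 + 2*f 3 + 3*f 4 + 3*f 5 = 3 ∧ f 1 + f 2 + f 3 + f 4 + 2*f 5 = 0)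
          ∧ f 0 + f 1 + f 2 + f 3 + f 4 + f 5 = 2} = (∅ : Set (Fin 6 → ℕ)) := by
        ext f
        simp only [Set.mem_setOf_eq, Set.mem_empty_iff_false, iff_false]
        rintro ⟨⟨h1, h2⟩, h3⟩
        omega
      rw [hemp, Set.ncard_empty]
      norm_num
    · have hone : {f : Fin 6 → ℕ | (f 0 + f 2 + 2*f 3 + 3*f 4 + 3*f 5 = 3 ∧ f 1 + f 2 + f 3 + f 4 + 2*f 5 = 0)
          ∧ f 0 + f 1 + f 2 + f 3 + f 4 + f 5 = 3} = {![3,0,0,0,0,0]} := by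
        ext f
        simp only [Set.mem_setOf_eq, Set.mem_singleton_iff]
        constructor
        · rintro ⟨⟨h1, h2⟩, h3⟩
          refine funext_vec ?_
          first
            | omega
            | (have hb4 : f 4 ≤ 1 := by omega
               have hb5 : f 5 ≤ 1 := by omega
               interval_cases hc4 : f 4 <;> interval_cases hc5 : f 5 <;> omega)
        · rintro rfl
          refine ⟨⟨?_, ?_⟩, ?_⟩ <;> decide
      rw [hone, Set.ncard_singleton]
      norm_num
    · have hemp : {f : Fin 6 → ℕ | (f 0 + f 2 + 2*f 3 + 3*f 4 + 3*f 5 = 3 ∧ f 1 + f 2 + f 3 + f 4 + 2*f 5 = 0)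
          ∧ f 0 + f 1 + f 2 + f 3 + f 4 + f 5 = 4} = (∅ : Set (Fin 6 → ℕ)) := by
        ext f
        simp only [Set.mem_setOf_eq, Set.mem_empty_iff_false, iff_false]
        rintro ⟨⟨h1, h2⟩, h3⟩
        omega
      rw [hemp, Set.ncard_empty]
      norm_num
    · have hemp : {f : Fin 6 → ℕ | (f 0 + f 2 + 2*f 3 + 3*f 4 + 3*f 5 = 3 ∧ f 1 + f 2 + f 3 + f 4 + 2*f 5 = 0)
          ∧ f 0 + f 1 + f 2 + f 3 + f 4 + f 5 = 5} = (∅ : Set (Fin 6 → ℕ)) := by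
        ext f
        simp only [Set.mem_setOf_eq, Set.mem_empty_iff_false, iff_false]
        rintro ⟨⟨h1, h2⟩, h3⟩
        omega
      rw [hemp, Set.ncard_empty]
      norm_num
  · rw [if_neg (by omega : ¬ k = 3)]
    have hemp : {f : Fin 6 → ℕ | (f 0 + f 2 + 2*f 3 + 3*f 4 + 3*f 5 = 3 ∧ f 1 + f 2 + f 3 + f 4 + 2*f 5 = 0)
          ∧ f 0 + f 1 + f 2 + f 3 + f 4 + f 5 = k} = (∅ : Set (Fin 6 → ℕ)) := by
      ext f
      simp only [Set.mem_setOf_eq, Set.mem_empty_iff_false, iff_false]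
      rintro ⟨⟨h1, h2⟩, h3⟩
      omega
    rw [hemp, Set.ncard_empty]


def A1v : Fin 12 → V := ![(1,0),(2,1),(1,1),(-1,0),(-2,-1),(-1,-1),(-1,0),(1,1),(2,1),(1,0),(-1,-1),(-2,-1)]

lemma hA1 : ∀ i : Fin 12, g i α1 = A1v i := by
  intro i
  rw [show g i α1 = g i ((1:ℚ),(0:ℚ)) from rfl]
  fin_cases i
  · show ((1:ℚ),(0:ℚ)) = ((1:ℚ), (0:ℚ))
    (try simp only [r_apply, s1_apply])
    (try norm_num [Prod.ext_iff])
  · show r (((1:ℚ),(0:ℚ))) = ((2:ℚ), (1:ℚ))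
    (try simp only [r_apply, s1_apply])
    (try norm_num [Prod.ext_iff])
  · show r (r (((1:ℚ),(0:ℚ)))) = ((1:ℚ), (1:ℚ))
    (try simp only [r_apply, s1_apply])
    (try norm_num [Prod.ext_iff])
  · show r (r (r (((1:ℚ),(0:ℚ))))) = ((-1:ℚ), (0:ℚ))
    (try simp only [r_apply, s1_apply])
    (try norm_num [Prod.ext_iff])
  · show r (r (r (r (((1:ℚ),(0:ℚ)))))) = ((-2:ℚ), (-1:ℚ))
    (try simp only [r_apply, s1_apply])
    (try norm_num [Prod.ext_iff])
  · show r (r (r (r (r (((1:ℚ),(0:ℚ))))))) = ((-1:ℚ), (-1:ℚ))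
    (try simp only [r_apply, s1_apply])
    (try norm_num [Prod.ext_iff])
  · show s1 (((1:ℚ),(0:ℚ))) = ((-1:ℚ), (0:ℚ))
    (try simp only [r_apply, s1_apply])
    (try norm_num [Prod.ext_iff])
  · show s1 (r (((1:ℚ),(0:ℚ)))) = ((1:ℚ), (1:ℚ))
    (try simp only [r_apply, s1_apply])
    (try norm_num [Prod.ext_iff])
  · show s1 (r (r (((1:ℚ),(0:ℚ))))) = ((2:ℚ), (1:ℚ))
    (try simp only [r_apply, s1_apply])
    (try norm_num [Prod.ext_iff])
  · show s1 (r (r (r (((1:ℚ),(0:ℚ)))))) = ((1:ℚ), (0:ℚ))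
    (try simp only [r_apply, s1_apply])
    (try norm_num [Prod.ext_iff])
  · show s1 (r (r (r (r (((1:ℚ),(0:ℚ))))))) = ((-1:ℚ), (-1:ℚ))
    (try simp only [r_apply, s1_apply])
    (try norm_num [Prod.ext_iff])
  · show s1 (r (r (r (r (r (((1:ℚ),(0:ℚ)))))))) = ((-2:ℚ), (-1:ℚ))
    (try simp only [r_apply, s1_apply])
    (try norm_num [Prod.ext_iff])

def A2v : Fin 12 → V := ![(0,1),(-3,-1),(-3,-2),(0,-1),(3,1),(3,2),(3,1),(0,-1),(-3,-2),(-3,-1),(0,1),(3,2)]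

lemma hA2 : ∀ i : Fin 12, g i α2 = A2v i := by
  intro i
  rw [show g i α2 = g i ((0:ℚ),(1:ℚ)) from rfl]
  fin_cases i
  · show ((0:ℚ),(1:ℚ)) = ((0:ℚ), (1:ℚ))
    (try simp only [r_apply, s1_apply])
    (try norm_num [Prod.ext_iff])
  · show r (((0:ℚ),(1:ℚ))) = ((-3:ℚ), (-1:ℚ))
    (try simp only [r_apply, s1_apply])
    (try norm_num [Prod.ext_iff])
  · show r (r (((0:ℚ),(1:ℚ)))) = ((-3:ℚ), (-2:ℚ))
    (try simp only [r_apply, s1_apply])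
    (try norm_num [Prod.ext_iff])
  · show r (r (r (((0:ℚ),(1:ℚ))))) = ((0:ℚ), (-1:ℚ))
    (try simp only [r_apply, s1_apply])
    (try norm_num [Prod.ext_iff])
  · show r (r (r (r (((0:ℚ),(1:ℚ)))))) = ((3:ℚ), (1:ℚ))
    (try simp only [r_apply, s1_apply])
    (try norm_num [Prod.ext_iff])
  · show r (r (r (r (r (((0:ℚ),(1:ℚ))))))) = ((3:ℚ), (2:ℚ))
    (try simp only [r_apply, s1_apply])
    (try norm_num [Prod.ext_iff])
  · show s1 (((0:ℚ),(1:ℚ))) = ((3:ℚ), (1:ℚ))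
    (try simp only [r_apply, s1_apply])
    (try norm_num [Prod.ext_iff])
  · show s1 (r (((0:ℚ),(1:ℚ)))) = ((0:ℚ), (-1:ℚ))
    (try simp only [r_apply, s1_apply])
    (try norm_num [Prod.ext_iff])
  · show s1 (r (r (((0:ℚ),(1:ℚ))))) = ((-3:ℚ), (-2:ℚ))
    (try simp only [r_apply, s1_apply])
    (try norm_num [Prod.ext_iff])
  · show s1 (r (r (r (((0:ℚ),(1:ℚ)))))) = ((-3:ℚ), (-1:ℚ))
    (try simp only [r_apply, s1_apply])
    (try norm_num [Prod.ext_iff])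
  · show s1 (r (r (r (r (((0:ℚ),(1:ℚ))))))) = ((0:ℚ), (1:ℚ))
    (try simp only [r_apply, s1_apply])
    (try norm_num [Prod.ext_iff])
  · show s1 (r (r (r (r (r (((0:ℚ),(1:ℚ)))))))) = ((3:ℚ), (2:ℚ))
    (try simp only [r_apply, s1_apply])
    (try norm_num [Prod.ext_iff])

lemma gmemW : ∀ i : Fin 12, g i ∈ W := by
  intro i
  have h : g i ∈ (W : Set (Equiv.Perm V)) := by
    rw [W_eq]; exact Set.mem_range_self i
  exact h

lemma PosRoots_eq : PosRoots =
    {((1:ℚ),(0:ℚ)), ((0:ℚ),(1:ℚ)), ((1:ℚ),(1:ℚ)), ((2:ℚ),(1:ℚ)), ((3:ℚ),(1:ℚ)), ((3:ℚ),(2:ℚ))} := by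
  apply Set.Subset.antisymm
  · rintro v ⟨⟨w, hw, hv⟩, hx, hy⟩
    obtain ⟨i, rfl⟩ : w ∈ Set.range g := by rw [← W_eq]; exact hw
    simp only [Set.mem_insert_iff, Set.mem_singleton_iff]
    rcases hv with rfl | rfl
    · rw [hA1 i] at hx hy ⊢
      fin_cases i <;> revert hx hy <;> decide
    · rw [hA2 i] at hx hy ⊢
      fin_cases i <;> revert hx hy <;> decide
  · rintro v (rfl | rfl | rfl | rfl | rfl | rfl)
    · exact ⟨⟨1, one_mem W, Or.inl rfl⟩, by norm_num⟩
    · exact ⟨⟨1, one_mem W, Or.inr rfl⟩, by norm_num⟩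
    · exact ⟨⟨g 7, gmemW 7, Or.inl (hA1 7).symm⟩, by norm_num⟩
    · exact ⟨⟨g 1, gmemW 1, Or.inl (hA1 1).symm⟩, by norm_num⟩
    · exact ⟨⟨g 6, gmemW 6, Or.inr (hA2 6).symm⟩, by norm_num⟩
    · exact ⟨⟨g 5, gmemW 5, Or.inr (hA2 5).symm⟩, by norm_num⟩


lemma len_one : len (1 : Equiv.Perm V) = 0 := by
  unfold len
  have h : {v ∈ PosRoots | ¬ (0 ≤ ((1 : Equiv.Perm V) v).1 ∧ 0 ≤ ((1 : Equiv.Perm V) v).2)}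
      = (∅ : Set V) := by
    ext v
    simp only [Set.mem_sep_iff, Set.mem_empty_iff_false, iff_false, Equiv.Perm.one_apply]
    rintro ⟨⟨_, hx, hy⟩, hneg⟩
    exact hneg ⟨hx, hy⟩
  rw [h, Set.ncard_empty]

lemma len_s1 : len s1 = 1 := by
  unfold len
  have h : {v ∈ PosRoots | ¬ (0 ≤ (s1 v).1 ∧ 0 ≤ (s1 v).2)} = {((1:ℚ),(0:ℚ))} := by
    ext v
    rw [Set.mem_sep_iff, PosRoots_eq]
    simp only [Set.mem_insert_iff, Set.mem_singleton_iff, s1_apply]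
    constructor
    · rintro ⟨(rfl | rfl | rfl | rfl | rfl | rfl), hneg⟩ <;>
        first
          | rfl
          | (exfalso; apply hneg; constructor <;> norm_num)
    · rintro rfl
      refine ⟨Or.inl rfl, ?_⟩
      rw [not_and_or]
      left
      norm_num
  rw [h, Set.ncard_singleton]

lemma len_s2 : len s2 = 1 := by
  unfold len
  have h : {v ∈ PosRoots | ¬ (0 ≤ (s2 v).1 ∧ 0 ≤ (s2 v).2)} = {((0:ℚ),(1:ℚ))} := by
    ext v
    rw [Set.mem_sep_iff, PosRoots_eq]
    simp only [Set.mem_insert_iff, Set.mem_singleton_iff, s2_apply]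
    constructor
    · rintro ⟨(rfl | rfl | rfl | rfl | rfl | rfl), hneg⟩ <;>
        first
          | rfl
          | (exfalso; apply hneg; constructor <;> norm_num)
    · rintro rfl
      refine ⟨Or.inr (Or.inl rfl), ?_⟩
      rw [not_and_or]
      right
      norm_num
  rw [h, Set.ncard_singleton]

lemma g7_eq : g 7 = s2 := by
  show s1 * r = s2
  show s1 * (s1 * s2) = s2
  rw [← mul_assoc, hs1, one_mul]

/-- The twelve signed terms of the alternating sum. -/
noncomputable def E (k : ℕ) : Fin 12 → ℤ :=
  ![(kostantCount k ((3:ℚ),(2:ℚ)) : ℤ), 0, 0, 0, 0, 0,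
    -(kostantCount k ((2:ℚ),(2:ℚ)) : ℤ), -(kostantCount k ((3:ℚ),(0:ℚ)) : ℤ), 0, 0, 0, 0]

lemma hF (k : ℕ) (i : Fin 12) :
    ((-1 : ℤ) ^ len (g i) * (kostantCount k (g i (htilde + ρ) - ρ) : ℤ)) = E k i := by
  fin_cases i
  · show ((-1 : ℤ) ^ len (g 0) * (kostantCount k (g 0 (htilde + ρ) - ρ) : ℤ))
        = (kostantCount k ((3:ℚ),(2:ℚ)) : ℤ)
    rw [hval 0, show val 0 = ((3:ℚ),(2:ℚ)) from rfl,
      show g 0 = (1 : Equiv.Perm V) from rfl, len_one, pow_zero, one_mul]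
  · show ((-1 : ℤ) ^ len (g 1) * (kostantCount k (g 1 (htilde + ρ) - ρ) : ℤ)) = 0
    rw [hval 1, kostantCount_eq_zero k (val 1) (Or.inl (by decide))]; simp
  · show ((-1 : ℤ) ^ len (g 2) * (kostantCount k (g 2 (htilde + ρ) - ρ) : ℤ)) = 0
    rw [hval 2, kostantCount_eq_zero k (val 2) (Or.inl (by decide))]; simp
  · show ((-1 : ℤ) ^ len (g 3) * (kostantCount k (g 3 (htilde + ρ) - ρ) : ℤ)) = 0
    rw [hval 3, kostantCount_eq_zero k (val 3) (Or.inl (by decide))]; simp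
  · show ((-1 : ℤ) ^ len (g 4) * (kostantCount k (g 4 (htilde + ρ) - ρ) : ℤ)) = 0
    rw [hval 4, kostantCount_eq_zero k (val 4) (Or.inl (by decide))]; simp
  · show ((-1 : ℤ) ^ len (g 5) * (kostantCount k (g 5 (htilde + ρ) - ρ) : ℤ)) = 0
    rw [hval 5, kostantCount_eq_zero k (val 5) (Or.inr (by decide))]; simp
  · show ((-1 : ℤ) ^ len (g 6) * (kostantCount k (g 6 (htilde + ρ) - ρ) : ℤ))
        = -(kostantCount k ((2:ℚ),(2:ℚ)) : ℤ)
    rw [hval 6, show val 6 = ((2:ℚ),(2:ℚ)) from rfl,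
      show g 6 = s1 from rfl, len_s1, pow_one, neg_one_mul]
  · show ((-1 : ℤ) ^ len (g 7) * (kostantCount k (g 7 (htilde + ρ) - ρ) : ℤ))
        = -(kostantCount k ((3:ℚ),(0:ℚ)) : ℤ)
    rw [hval 7, show val 7 = ((3:ℚ),(0:ℚ)) from rfl, g7_eq, len_s2, pow_one, neg_one_mul]
  · show ((-1 : ℤ) ^ len (g 8) * (kostantCount k (g 8 (htilde + ρ) - ρ) : ℤ)) = 0
    rw [hval 8, kostantCount_eq_zero k (val 8) (Or.inl (by decide))]; simp
  · show ((-1 : ℤ) ^ len (g 9) * (kostantCount k (g 9 (htilde + ρ) - ρ) : ℤ)) = 0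
    rw [hval 9, kostantCount_eq_zero k (val 9) (Or.inl (by decide))]; simp
  · show ((-1 : ℤ) ^ len (g 10) * (kostantCount k (g 10 (htilde + ρ) - ρ) : ℤ)) = 0
    rw [hval 10, kostantCount_eq_zero k (val 10) (Or.inl (by decide))]; simp
  · show ((-1 : ℤ) ^ len (g 11) * (kostantCount k (g 11 (htilde + ρ) - ρ) : ℤ)) = 0
    rw [hval 11, kostantCount_eq_zero k (val 11) (Or.inl (by decide))]; simp

end G2


open G2 in
/-- In the Lie algebra of type G2 with highest root α̃, the q-analog of Kostant's
weight multiplicity of the zero weight in the adjoint representation is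
m_q(α̃, 0) = q + q⁵, matching Σ_i q^{e_i} for the exponents e₁ = 1, e₂ = 5 of G2.
The statement is given coefficientwise: for each k, the coefficient of q^k in
Σ_{σ ∈ W} (-1)^{ℓ(σ)} ℘_q(σ(α̃+ρ) − ρ) is 1 if k ∈ {1, 5} and 0 otherwise. -/
theorem g2_mq_adjoint_zero_weight :
    ∀ k : ℕ,
      (∑ᶠ σ ∈ (W : Set (Equiv.Perm V)),
        ((-1 : ℤ) ^ len σ * (kostantCount k (σ (htilde + ρ) - ρ) : ℤ))) =
      (if k = 1 ∨ k = 5 then 1 else 0) := by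
  intro k
  rw [W_eq, finsum_mem_range g_inj, finsum_eq_sum_of_fintype]
  rw [Finset.sum_congr rfl fun i _ => hF k i]
  rw [show ∑ i : Fin 12, E k i =
      (kostantCount k ((3:ℚ),(2:ℚ)) : ℤ) + (-(kostantCount k ((2:ℚ),(2:ℚ)) : ℤ)
        + -(kostantCount k ((3:ℚ),(0:ℚ)) : ℤ)) by
    simp [E, Fin.sum_univ_succ]]
  rw [kc32 k, kc22 k, kc30 k]
  rcases Nat.lt_or_ge k 6 with hk | hk
  · interval_cases k <;> norm_num
  · rw [if_neg (by omega : ¬ k = 1), if_neg (by omega : ¬ k = 2),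
      if_neg (by omega : ¬ k = 3), if_neg (by omega : ¬ k = 4),
      if_neg (by omega : ¬ k = 5), if_neg (by omega : ¬ k = 2),
      if_neg (by omega : ¬ k = 3), if_neg (by omega : ¬ k = 4),
      if_neg (by omega : ¬ k = 3), if_neg (by omega : ¬ (k = 1 ∨ k = 5))]
    norm_num
end

section
/- For the Lie algebra of type G2 with highest root α̃, the Weyl alternation set A(α̃, 0) = {σ ∈ W : ℘(σ(α̃+ρ) − ρ) > 0} consists exactly of the identity, s1, and s2; every element of W of length at least 2 yields a weight σ(α̃+ρ) − ρ that is not a nonnegative integral combination of positive roots. -/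
/-! In the coordinates `(a, b) = aα₁ + bα₂` the Weyl group acts by twelve explicit integer
matrices, closed under products and inverses and containing those of `s₁` and `s₂`, so the
weight `σ(α̃ + ρ) - ρ` can be computed for every `σ ∈ W`. Its coordinates are both nonnegative
only for `σ = 1, s₁, s₂`, where it is `(3, 2)`, `(2, 2)`, `(3, 0)`. Since `α₁` and `α₂` are
themselves positive roots, Kostant's partition function is positive exactly on `ℕα₁ + ℕα₂`,
which gives the alternation set; and `1, s₁, s₂` have length at most one, because the only
positive root made negative by `sᵢ` is `αᵢ`. -/

namespace G2

/-- `(a, b, c, d)` encodes the integer matrix `[[a, b], [c, d]]`, acting on the coordinates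
of a weight with respect to `α₁, α₂`. -/
abbrev Mat := ℤ × ℤ × ℤ × ℤ

namespace Mat

def act (m : Mat) (v : V) : V :=
  (m.1 * v.1 + m.2.1 * v.2, m.2.2.1 * v.1 + m.2.2.2 * v.2)

def mul (m n : Mat) : Mat :=
  (m.1 * n.1 + m.2.1 * n.2.2.1, m.1 * n.2.1 + m.2.1 * n.2.2.2,
   m.2.2.1 * n.1 + m.2.2.2 * n.2.2.1, m.2.2.1 * n.2.1 + m.2.2.2 * n.2.2.2)

lemma act_act (m n : Mat) (v : V) : act m (act n v) = act (mul m n) v := by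
  unfold act mul
  apply Prod.ext <;> (push_cast; ring)

lemma act_one (v : V) : act (1, 0, 0, 1) v = v := by
  simp [act]

end Mat

/-- The matrices of the twelve elements of `W`; the first three are those of `1`, `s₁`, `s₂`. -/
def weylMats : List Mat :=
  [(1,0,0,1), (-1,3,0,1), (1,0,1,-1), (2,-3,1,-1), (-1,3,-1,2), (2,-3,1,-2),
   (-2,3,-1,2), (1,-3,1,-2), (-2,3,-1,1), (1,-3,0,-1), (-1,0,-1,1), (-1,0,0,-1)]

lemma mul_mem_weylMats : ∀ m ∈ weylMats, ∀ n ∈ weylMats, Mat.mul m n ∈ weylMats := by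
  decide

lemma exists_inv_mem_weylMats :
    ∀ m ∈ weylMats, ∃ n ∈ weylMats, Mat.mul n m = (1, 0, 0, 1) := by
  decide

lemma coe_one_eq_act : ⇑(1 : Equiv.Perm V) = Mat.act (1, 0, 0, 1) :=
  funext fun v => (Mat.act_one v).symm

lemma coe_s1_eq_act : ⇑s1 = Mat.act (-1, 3, 0, 1) := by
  funext v
  show s1fun v = _
  simp only [s1fun, pair1, α1, Mat.act]
  apply Prod.ext <;> (simp; try ring)

lemma coe_s2_eq_act : ⇑s2 = Mat.act (1, 0, 1, -1) := by
  funext v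
  show s2fun v = _
  simp only [s2fun, pair2, α2, Mat.act]
  apply Prod.ext <;> (simp; try ring)

lemma exists_mem_weylMats_of_mem_W {σ : Equiv.Perm V} (hσ : σ ∈ W) :
    ∃ m ∈ weylMats, ⇑σ = Mat.act m := by
  induction hσ using Subgroup.closure_induction with
  | mem x hx =>
    rcases hx with rfl | rfl
    · exact ⟨_, by decide, coe_s1_eq_act⟩
    · exact ⟨_, by decide, coe_s2_eq_act⟩
  | one => exact ⟨_, by decide, coe_one_eq_act⟩
  | mul x y _ _ ihx ihy =>
    obtain ⟨m, hm, hx⟩ := ihx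
    obtain ⟨n, hn, hy⟩ := ihy
    refine ⟨Mat.mul m n, mul_mem_weylMats m hm n hn, funext fun v => ?_⟩
    rw [Equiv.Perm.coe_mul, Function.comp_apply, hy, hx, Mat.act_act]
  | inv x _ ih =>
    obtain ⟨m, hm, hx⟩ := ih
    obtain ⟨n, hn, hnm⟩ := exists_inv_mem_weylMats m hm
    refine ⟨n, hn, funext fun v => ?_⟩
    calc x⁻¹ v = Mat.act n (Mat.act m (x⁻¹ v)) := by rw [Mat.act_act, hnm, Mat.act_one]
      _ = Mat.act n v := by rw [← hx, ← Equiv.Perm.mul_apply, mul_inv_cancel, Equiv.Perm.one_apply]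

lemma mem_W_of_eq_one_or_s1_or_s2 {σ : Equiv.Perm V} (h : σ = 1 ∨ σ = s1 ∨ σ = s2) :
    σ ∈ W := by
  rcases h with rfl | rfl | rfl
  · exact W.one_mem
  · exact Subgroup.subset_closure (Set.mem_insert _ _)
  · exact Subgroup.subset_closure (Set.mem_insert_of_mem _ rfl)

lemma smul_α1_add_smul_α2 (a b : ℚ) : a • α1 + b • α2 = (a, b) := by
  simp [α1, α2]

lemma htilde_add_ρ : htilde + ρ = (8, 5) := by
  norm_num [htilde, ρ]

lemma eq_one_or_s1_or_s2_of_dot_nonneg {σ : Equiv.Perm V} (hσ : σ ∈ W)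
    (h1 : 0 ≤ (σ (htilde + ρ) - ρ).1) (h2 : 0 ≤ (σ (htilde + ρ) - ρ).2) :
    σ = 1 ∨ σ = s1 ∨ σ = s2 := by
  obtain ⟨m, hm, hσm⟩ := exists_mem_weylMats_of_mem_W hσ
  simp only [← DFunLike.coe_fn_eq, hσm, coe_one_eq_act, coe_s1_eq_act, coe_s2_eq_act]
  rw [hσm, htilde_add_ρ] at h1 h2
  simp only [weylMats, List.mem_cons, List.not_mem_nil, or_false] at hm
  rcases hm with rfl|rfl|rfl|rfl|rfl|rfl|rfl|rfl|rfl|rfl|rfl|rfl <;>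
    norm_num [Mat.act, ρ] at *

lemma exists_nat_dot_eq_iff {σ : Equiv.Perm V} (hσ : σ ∈ W) :
    (∃ a b : ℕ, σ (htilde + ρ) - ρ = (a : ℚ) • α1 + (b : ℚ) • α2) ↔
      σ = 1 ∨ σ = s1 ∨ σ = s2 := by
  simp only [smul_α1_add_smul_α2]
  constructor
  · rintro ⟨a, b, hab⟩
    exact eq_one_or_s1_or_s2_of_dot_nonneg hσ (by simp [hab]) (by simp [hab])
  · rintro (rfl | rfl | rfl)
    · exact ⟨3, 2, by norm_num [htilde, ρ]⟩
    · exact ⟨2, 2, by norm_num [coe_s1_eq_act, Mat.act, htilde, ρ]⟩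
    · exact ⟨3, 0, by norm_num [coe_s2_eq_act, Mat.act, htilde, ρ]⟩

lemma sum_smul_posRoot (f : Fin 6 → ℕ) :
    ∑ i, (f i : ℚ) • posRoot i =
      (((f 0 + f 2 + 2 * f 3 + 3 * f 4 + 3 * f 5 : ℕ) : ℚ),
        ((f 1 + f 2 + f 3 + f 4 + 2 * f 5 : ℕ) : ℚ)) := by
  simp only [Fin.sum_univ_six, posRoot]
  apply Prod.ext <;> (simp; ring)

lemma kostant_pos_iff (ξ : V) :
    0 < kostant ξ ↔ ∃ a b : ℕ, ξ = (a : ℚ) • α1 + (b : ℚ) • α2 := by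
  simp only [smul_α1_add_smul_α2]
  constructor
  · intro h
    obtain ⟨f, hf⟩ := Set.nonempty_of_ncard_ne_zero h.ne'
    exact ⟨_, _, hf.symm.trans (sum_smul_posRoot f)⟩
  · rintro ⟨a, b, rfl⟩
    have hfin : {f : Fin 6 → ℕ | ∑ i, (f i : ℚ) • posRoot i = ((a : ℚ), (b : ℚ))}.Finite := by
      refine (Set.finite_Iic fun _ => a + b).subset fun f hf => ?_
      simp only [Set.mem_ofPred_eq, sum_smul_posRoot, Prod.mk.injEq, Nat.cast_inj] at hf
      intro i
      show f i ≤ a + b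
      fin_cases i <;> simp only [Fin.zero_eta, Fin.mk_one, Fin.reduceFinMk] <;> omega
    rw [kostant, Set.ncard_pos hfin]
    exact ⟨![a, b, 0, 0, 0, 0], by simp [sum_smul_posRoot]⟩

lemma posRoots_subset_range : PosRoots ⊆ Set.range posRoot := by
  rintro v ⟨⟨w, hw, hv⟩, h1, h2⟩
  obtain ⟨m, hm, hwm⟩ := exists_mem_weylMats_of_mem_W hw
  simp only [posRoot, Matrix.range_cons, Matrix.range_empty, Set.union_empty,
    Set.singleton_union, Set.mem_insert_iff, Set.mem_singleton_iff]
  simp only [weylMats, List.mem_cons, List.not_mem_nil, or_false] at hm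
  rcases hv with rfl | rfl <;> rw [hwm] at h1 h2 ⊢ <;>
    rcases hm with rfl|rfl|rfl|rfl|rfl|rfl|rfl|rfl|rfl|rfl|rfl|rfl <;>
    norm_num [Mat.act, α1, α2] at *

lemma len_le_one_of_forall_posRoot {σ : Equiv.Perm V} (α : V)
    (h : ∀ i, posRoot i = α ∨ 0 ≤ (σ (posRoot i)).1 ∧ 0 ≤ (σ (posRoot i)).2) :
    len σ ≤ 1 := by
  have hsub : {v ∈ PosRoots | ¬ (0 ≤ (σ v).1 ∧ 0 ≤ (σ v).2)} ⊆ {α} := by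
    rintro v ⟨hv, hneg⟩
    obtain ⟨i, rfl⟩ := posRoots_subset_range hv
    exact (h i).resolve_right hneg
  exact (Set.ncard_le_ncard hsub).trans (Set.ncard_singleton α).le

lemma len_le_one_of_eq_one_or_s1_or_s2 {σ : Equiv.Perm V} (h : σ = 1 ∨ σ = s1 ∨ σ = s2) :
    len σ ≤ 1 := by
  rcases h with rfl | rfl | rfl
  · exact len_le_one_of_forall_posRoot 0 fun i => by fin_cases i <;> norm_num [posRoot]
  · exact len_le_one_of_forall_posRoot α1 fun i => by
      fin_cases i <;> norm_num [posRoot, coe_s1_eq_act, Mat.act, α1]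
  · exact len_le_one_of_forall_posRoot α2 fun i => by
      fin_cases i <;> norm_num [posRoot, coe_s2_eq_act, Mat.act, α2]

end G2

open G2 in
/-- For G2 with highest root α̃, the Weyl alternation set
A(α̃, 0) = {σ ∈ W : ℘(σ(α̃+ρ) − ρ) > 0} consists exactly of the identity, s1 and s2;
and every element of W of length at least 2 yields a weight σ(α̃+ρ) − ρ that is not
a nonnegative integral combination of the simple roots. -/
theorem g2_weyl_alternation_set :
    {σ : Equiv.Perm V | σ ∈ W ∧ 0 < kostant (σ (htilde + ρ) - ρ)} =
      {1, s1, s2} ∧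
    ∀ σ ∈ W, 2 ≤ len σ →
      ¬ ∃ a b : ℕ, σ (htilde + ρ) - ρ = (a : ℚ) • α1 + (b : ℚ) • α2 := by
  refine ⟨Set.ext fun σ => ?_, fun σ hσ hlen hdot => ?_⟩
  · simp only [Set.mem_ofPred_eq, Set.mem_insert_iff, Set.mem_singleton_iff, kostant_pos_iff]
    refine ⟨fun ⟨hσ, hdot⟩ => (exists_nat_dot_eq_iff hσ).1 hdot, fun h => ?_⟩
    have hσ := mem_W_of_eq_one_or_s1_or_s2 h
    exact ⟨hσ, (exists_nat_dot_eq_iff hσ).2 h⟩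
  · have := len_le_one_of_eq_one_or_s1_or_s2 ((exists_nat_dot_eq_iff hσ).1 hdot)
    omega
end

section
/- Let σ be an element of the Weyl group W of a root system with simple roots Δ, and s_i the simple reflection for α_i ∈ Δ. Write σ(ρ) − ρ = −Σ_j c_j α_j and s_i σ(ρ) − ρ = −Σ_j e_j α_j with c_j, e_j ≥ 0. If ℓ(s_i σ) > ℓ(σ), then e_j ≥ c_j for all j, and moreover e_i > c_i. -/
/-!
Since `s i` is the reflection `v ↦ v - ⟨v, αᵢ∨⟩ αᵢ`, we get `e = c + ⟨σρ, αᵢ∨⟩ • δᵢ`, so everything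
reduces to `⟨σρ, αᵢ∨⟩ > 0`. As `ℓ(sᵢσ) > ℓ(σ)`, some positive root `β` is sent by `σ` to a positive
multiple `q αᵢ`. Averaging the dot product over the finite group of linear automorphisms preserving
`Φ` gives an invariant inner product `( , )` with `⟨v, αᵢ∨⟩ (αᵢ, αᵢ) = 2 (v, αᵢ)`; hence
`⟨σρ, αᵢ∨⟩` has the sign of `q (σρ, αᵢ) = (σρ, σβ) = (ρ, β)`, which is positive because
`⟨ρ, αⱼ∨⟩ > 0` for every simple root.
-/

/-- A (crystallographic, reduced) root system of rank `r`, presented concretely: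
weights live in `Fin r → ℚ`, `Φ` is the finite set of roots, `α` is a base of
simple roots, and `pairing i` is the linear functional `⟨·, αᵢ∨⟩` given by the
coroot of the `i`-th simple root. -/
structure RootSystemBase (r : ℕ) where
  /-- The finite set of roots. -/
  Φ : Finset (Fin r → ℚ)
  /-- The simple roots. -/
  α : Fin r → (Fin r → ℚ)
  /-- Pairing with the coroot of the `i`-th simple root. -/
  pairing : Fin r → ((Fin r → ℚ) →ₗ[ℚ] ℚ)
  α_mem : ∀ i, α i ∈ Φ
  indep : LinearIndependent ℚ α
  pairing_self : ∀ i, pairing i (α i) = 2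
  pairing_int : ∀ i, ∀ β ∈ Φ, ∃ n : ℤ, pairing i β = n
  refl_mem : ∀ i, ∀ β ∈ Φ, β - pairing i β • α i ∈ Φ
  pos_or_neg : ∀ β ∈ Φ,
    (∃ c : Fin r → ℕ, β = ∑ j, (c j : ℚ) • α j) ∨
    (∃ c : Fin r → ℕ, β = -∑ j, (c j : ℚ) • α j)
  zero_not_mem : (0 : Fin r → ℚ) ∉ Φ

namespace RootSystemBase

variable {r : ℕ} (R : RootSystemBase r)

/-- The simple reflection corresponding to the `i`-th simple root, as a function. -/
def sfun (i : Fin r) (v : Fin r → ℚ) : Fin r → ℚ := v - R.pairing i v • R.α i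

lemma sfun_involutive (i : Fin r) : Function.Involutive (R.sfun i) := by
  intro v
  have h : R.pairing i (R.sfun i v) = -R.pairing i v := by
    simp [sfun, map_sub, map_smul, R.pairing_self, smul_eq_mul]
    ring
  show R.sfun i (R.sfun i v) = v
  rw [sfun, h]
  rw [sfun]
  module

/-- The simple reflection corresponding to the `i`-th simple root. -/
def s (i : Fin r) : Equiv.Perm (Fin r → ℚ) := (R.sfun_involutive i).toPerm

/-- The Weyl group, generated by the simple reflections. -/
def W : Subgroup (Equiv.Perm (Fin r → ℚ)) := Subgroup.closure (Set.range R.s)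

/-- A weight is "positive" when it is a nonnegative integral combination of the
simple roots. -/
def IsPos (β : Fin r → ℚ) : Prop := ∃ c : Fin r → ℕ, β = ∑ j, (c j : ℚ) • R.α j

open Classical in
/-- The finite set of positive roots. -/
noncomputable def posFinset : Finset (Fin r → ℚ) := R.Φ.filter R.IsPos

/-- `ρ`, the half-sum of the positive roots. -/
noncomputable def ρ : Fin r → ℚ := (1 / 2 : ℚ) • ∑ β ∈ R.posFinset, β

open Classical in
/-- The length of a Weyl group element: the number of positive roots sent to
nonpositive weights (i.e. to negative roots, for elements of the Weyl group). -/
noncomputable def len (σ : Equiv.Perm (Fin r → ℚ)) : ℕ :=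
  (R.posFinset.filter fun β => ¬ R.IsPos (σ β)).card

/-- Kostant's partition function: the number of ways of writing `ξ` as a
nonnegative integral combination of positive roots. -/
noncomputable def kostant (ξ : Fin r → ℚ) : ℕ :=
  Set.ncard {f : R.posFinset → ℕ |
    ∑ β : R.posFinset, (f β : ℚ) • (β : Fin r → ℚ) = ξ}

/-- The coefficient of `q^k` in the `q`-analog `℘_q(ξ)` of Kostant's partition
function: the number of ways of writing `ξ` as a nonnegative integral combination
of exactly `k` positive roots counted with multiplicity. -/
noncomputable def kostantCount (k : ℕ) (ξ : Fin r → ℚ) : ℕ :=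
  Set.ncard {f : R.posFinset → ℕ |
    (∑ β : R.posFinset, (f β : ℚ) • (β : Fin r → ℚ) = ξ) ∧
    ∑ β : R.posFinset, f β = k}

end RootSystemBase

namespace RootSystemBase

variable {r : ℕ} (R : RootSystemBase r)

lemma s_apply (i : Fin r) (v : Fin r → ℚ) : R.s i v = v - R.pairing i v • R.α i := rfl

lemma s_s (i : Fin r) (v : Fin r → ℚ) : R.s i (R.s i v) = v := R.sfun_involutive i v

lemma s_α_self (i : Fin r) : R.s i (R.α i) = -R.α i := by
  rw [s_apply, R.pairing_self]
  module

lemma pairing_s_self (i : Fin r) (v : Fin r → ℚ) :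
    R.pairing i (R.s i v) = -R.pairing i v := by
  simp only [s_apply, map_sub, map_smul, R.pairing_self, smul_eq_mul]
  ring

lemma ne_zero_of_mem {β : Fin r → ℚ} (hβ : β ∈ R.Φ) : β ≠ 0 :=
  fun h => R.zero_not_mem (h ▸ hβ)

lemma linearCombination_α_injective : Function.Injective (Fintype.linearCombination ℚ R.α) :=
  R.indep.fintypeLinearCombination_injective

lemma isPos_iff {β : Fin r → ℚ} :
    R.IsPos β ↔ ∃ c : Fin r → ℕ, β = Fintype.linearCombination ℚ R.α (fun j => c j) :=
  Iff.rfl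

lemma isPos_α (i : Fin r) : R.IsPos (R.α i) := by
  refine R.isPos_iff.2 ⟨Pi.single i 1, ?_⟩
  have hcast : (fun j => ((Pi.single i 1 : Fin r → ℕ) j : ℚ)) = Pi.single i 1 := by
    ext j; by_cases h : j = i <;> simp [h]
  rw [hcast, Fintype.linearCombination_apply_single, one_smul]

lemma not_isPos_neg {β : Fin r → ℚ} (hβ : β ≠ 0) (hpos : R.IsPos β) : ¬ R.IsPos (-β) := by
  rintro ⟨d, hd⟩
  obtain ⟨c, rfl⟩ := R.isPos_iff.1 hpos
  rw [← Fintype.linearCombination_apply] at hd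
  have hsum : Fintype.linearCombination ℚ R.α ((fun j => (c j : ℚ)) + fun j => (d j : ℚ)) =
      Fintype.linearCombination ℚ R.α 0 := by
    rw [map_add, ← hd, map_zero, add_neg_cancel]
  have hc : ∀ j, (c j : ℚ) = 0 := fun j => by
    have := congrFun (R.linearCombination_α_injective hsum) j
    simp only [Pi.add_apply, Pi.zero_apply] at this
    linarith [(c j).cast_nonneg (α := ℚ), (d j).cast_nonneg (α := ℚ)]
  exact hβ (by rw [show (fun j => (c j : ℚ)) = 0 from funext hc, map_zero])

lemma isPos_neg_of_not_isPos {β : Fin r → ℚ} (hβ : β ∈ R.Φ) (h : ¬ R.IsPos β) :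
    R.IsPos (-β) := by
  rcases R.pos_or_neg β hβ with hpos | ⟨c, hc⟩
  · exact absurd hpos h
  · exact ⟨c, by rw [hc, neg_neg]⟩

lemma mem_posFinset {β : Fin r → ℚ} : β ∈ R.posFinset ↔ β ∈ R.Φ ∧ R.IsPos β := by
  classical exact Finset.mem_filter

lemma α_mem_posFinset (i : Fin r) : R.α i ∈ R.posFinset :=
  R.mem_posFinset.2 ⟨R.α_mem i, R.isPos_α i⟩

lemma exists_eq_smul_α_of_not_isPos_s {i : Fin r} {β : Fin r → ℚ} (hβ : β ∈ R.posFinset)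
    (hs : ¬ R.IsPos (R.s i β)) : ∃ q : ℚ, 0 < q ∧ β = q • R.α i := by
  obtain ⟨hΦ, hpos⟩ := R.mem_posFinset.1 hβ
  obtain ⟨c, hc⟩ := R.isPos_iff.1 hpos
  obtain ⟨d, hd⟩ := R.isPos_neg_of_not_isPos (R.refl_mem i β hΦ) hs
  rw [← Fintype.linearCombination_apply] at hd
  set lc := Fintype.linearCombination ℚ R.α
  have hsum : lc ((fun j => (c j : ℚ)) + fun j => (d j : ℚ)) =
      lc (Pi.single i (R.pairing i β)) := by
    rw [map_add, ← hc, ← hd, Fintype.linearCombination_apply_single]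
    abel
  have hc_off : ∀ j ≠ i, (c j : ℚ) = 0 := fun j hj => by
    have := congrFun (R.linearCombination_α_injective hsum) j
    simp only [Pi.add_apply, Pi.single_eq_of_ne hj] at this
    linarith [(c j).cast_nonneg (α := ℚ), (d j).cast_nonneg (α := ℚ)]
  have hβ_ray : β = (c i : ℚ) • R.α i := by
    rw [hc, ← Fintype.linearCombination_apply_single]
    congr 1
    ext j
    by_cases hj : j = i
    · subst hj; simp
    · simp [hj, hc_off j hj]
  refine ⟨c i, ?_, hβ_ray⟩
  refine lt_of_le_of_ne (c i).cast_nonneg fun h => R.ne_zero_of_mem hΦ ?_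
  rw [hβ_ray, ← h, zero_smul]

open Classical in
lemma s_mem_filter_isPos_s {i : Fin r} {β : Fin r → ℚ}
    (hβ : β ∈ R.posFinset.filter fun β => R.IsPos (R.s i β)) :
    R.s i β ∈ R.posFinset.filter fun β => R.IsPos (R.s i β) := by
  obtain ⟨hβP, hs⟩ := Finset.mem_filter.1 hβ
  obtain ⟨hΦ, hpos⟩ := R.mem_posFinset.1 hβP
  exact Finset.mem_filter.2 ⟨R.mem_posFinset.2 ⟨R.refl_mem i β hΦ, hs⟩, by rwa [R.s_s]⟩

lemma pairing_ρ_pos (i : Fin r) : 0 < R.pairing i R.ρ := by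
  classical
  -- `s i` permutes the positive roots it keeps positive, and negates their pairings
  have hkept : ∑ β ∈ R.posFinset.filter (fun β => R.IsPos (R.s i β)), R.pairing i β = 0 := by
    have h := Finset.sum_nbij' (R.s i) (R.s i) (fun β hβ => R.s_mem_filter_isPos_s hβ)
      (fun β hβ => R.s_mem_filter_isPos_s hβ) (fun β _ => R.s_s i β) (fun β _ => R.s_s i β)
      (g := fun β => R.pairing i (R.s i β)) (fun β _ => by rw [R.s_s])
    simp only [R.pairing_s_self, Finset.sum_neg_distrib] at h
    linarith
  have hflipped :
      0 < ∑ β ∈ R.posFinset.filter (fun β => ¬ R.IsPos (R.s i β)), R.pairing i β := by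
    refine Finset.sum_pos (fun β hβ => ?_) ⟨R.α i, ?_⟩
    · obtain ⟨hβP, hs⟩ := Finset.mem_filter.1 hβ
      obtain ⟨q, hq, rfl⟩ := R.exists_eq_smul_α_of_not_isPos_s hβP hs
      rw [map_smul, R.pairing_self, smul_eq_mul]
      positivity
    · refine Finset.mem_filter.2 ⟨R.α_mem_posFinset i, ?_⟩
      rw [R.s_α_self]
      exact R.not_isPos_neg (R.ne_zero_of_mem (R.α_mem i)) (R.isPos_α i)
  rw [ρ, map_smul, map_sum, smul_eq_mul,
    ← Finset.sum_filter_add_sum_filter_not R.posFinset (fun β => R.IsPos (R.s i β)), hkept]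
  positivity

def Aut : Subgroup (Equiv.Perm (Fin r → ℚ)) where
  carrier := {σ | IsLinearMap ℚ σ ∧ ∀ v, σ v ∈ R.Φ ↔ v ∈ R.Φ}
  mul_mem' := by
    rintro σ τ ⟨hσ, hσΦ⟩ ⟨hτ, hτΦ⟩
    exact ⟨((IsLinearMap.mk' σ hσ).comp (IsLinearMap.mk' τ hτ)).isLinear,
      fun v => (hσΦ _).trans (hτΦ v)⟩
  one_mem' := ⟨⟨fun _ _ => rfl, fun _ _ => rfl⟩, fun _ => Iff.rfl⟩
  inv_mem' := by
    rintro σ ⟨hσ, hσΦ⟩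
    refine ⟨⟨fun a b => σ.injective ?_, fun q a => σ.injective ?_⟩, fun v => ?_⟩
    · simp only [hσ.map_add, Equiv.Perm.coe_inv, Equiv.apply_symm_apply]
    · simp only [hσ.map_smul, Equiv.Perm.coe_inv, Equiv.apply_symm_apply]
    · rw [← hσΦ, Equiv.Perm.coe_inv, Equiv.apply_symm_apply]

lemma s_mem_Aut (i : Fin r) : R.s i ∈ R.Aut :=
  ⟨⟨fun a b => by simp only [s_apply, map_add]; module,
    fun q a => by simp only [s_apply, map_smul, smul_eq_mul]; module⟩,
   fun v => ⟨fun h => R.s_s i v ▸ R.refl_mem i _ h, R.refl_mem i v⟩⟩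

lemma W_le_Aut : R.W ≤ R.Aut :=
  Subgroup.closure_le _ |>.2 <| Set.range_subset_iff.2 R.s_mem_Aut

def linearMapOfAut (σ : R.Aut) : (Fin r → ℚ) →ₗ[ℚ] (Fin r → ℚ) := IsLinearMap.mk' _ σ.2.1

lemma linearMapOfAut_apply (σ : R.Aut) (v : Fin r → ℚ) : R.linearMapOfAut σ v = σ.1 v := rfl

instance : Finite R.Aut := by
  have hspan : Submodule.span ℚ (Set.range R.α) = ⊤ :=
    R.indep.span_eq_top_of_card_eq_finrank' (by simp)
  refine Finite.of_injective (β := Fin r → R.Φ)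
    (fun σ j => ⟨σ.1 (R.α j), (σ.2.2 _).2 (R.α_mem j)⟩) fun σ τ h => ?_
  have hlin := LinearMap.ext_on_range hspan (f := R.linearMapOfAut σ) (g := R.linearMapOfAut τ)
    fun j => congrArg Subtype.val (congrFun h j)
  exact Subtype.ext (Equiv.ext (LinearMap.ext_iff.1 hlin))

noncomputable instance : Fintype R.Aut := Fintype.ofFinite _

noncomputable def invForm : LinearMap.BilinForm ℚ (Fin r → ℚ) :=
  ∑ τ : R.Aut, (dotProductBilin ℚ ℚ).compl₁₂ (R.linearMapOfAut τ) (R.linearMapOfAut τ)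

lemma invForm_apply (v w : Fin r → ℚ) :
    R.invForm v w = ∑ τ : R.Aut, τ.1 v ⬝ᵥ τ.1 w := by
  simp [invForm, LinearMap.sum_apply, linearMapOfAut_apply]

lemma invForm_map {σ : Equiv.Perm (Fin r → ℚ)} (hσ : σ ∈ R.Aut) (v w : Fin r → ℚ) :
    R.invForm (σ v) (σ w) = R.invForm v w := by
  simp only [invForm_apply]
  exact Fintype.sum_equiv (Equiv.mulRight ⟨σ, hσ⟩) _ _ fun τ => rfl

lemma invForm_self_pos {v : Fin r → ℚ} (hv : v ≠ 0) : 0 < R.invForm v v := by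
  have hdot : ∀ w : Fin r → ℚ, 0 ≤ w ⬝ᵥ w := fun w => by
    simpa using dotProduct_self_star_nonneg w
  calc 0 < v ⬝ᵥ v := by simpa using Matrix.dotProduct_self_star_pos_iff.2 hv
    _ ≤ R.invForm v v := by
      rw [invForm_apply]
      exact Finset.single_le_sum (f := fun τ : R.Aut => τ.1 v ⬝ᵥ τ.1 v)
        (fun τ _ => hdot _) (Finset.mem_univ 1)

lemma two_mul_invForm_α (i : Fin r) (v : Fin r → ℚ) :
    2 * R.invForm v (R.α i) = R.pairing i v * R.invForm (R.α i) (R.α i) := by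
  have h := R.invForm_map (R.s_mem_Aut i) v (R.α i)
  rw [s_α_self, s_apply] at h
  simp only [map_neg, LinearMap.map_sub₂, LinearMap.map_smul₂, smul_eq_mul] at h
  linarith

lemma invForm_ρ_α_pos (i : Fin r) : 0 < R.invForm R.ρ (R.α i) := by
  have h : 0 < 2 * R.invForm R.ρ (R.α i) := by
    rw [two_mul_invForm_α]
    exact mul_pos (R.pairing_ρ_pos i) (R.invForm_self_pos (R.ne_zero_of_mem (R.α_mem i)))
  linarith

lemma invForm_ρ_pos {β : Fin r → ℚ} (hβ : β ∈ R.posFinset) : 0 < R.invForm R.ρ β := by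
  obtain ⟨hΦ, c, rfl⟩ := R.mem_posFinset.1 hβ
  obtain ⟨j, hj⟩ : ∃ j, c j ≠ 0 := by
    by_contra! h
    exact R.ne_zero_of_mem hΦ (by simp [h])
  simp only [map_sum, map_smul, smul_eq_mul]
  exact Finset.sum_pos' (fun k _ => mul_nonneg (c k).cast_nonneg (R.invForm_ρ_α_pos k).le)
    ⟨j, Finset.mem_univ j, mul_pos (by positivity) (R.invForm_ρ_α_pos j)⟩

lemma exists_posFinset_not_isPos_s_of_len_lt {σ : Equiv.Perm (Fin r → ℚ)} (hσ : σ ∈ R.Aut)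
    {i : Fin r} (hlen : R.len σ < R.len (R.s i * σ)) :
    ∃ β ∈ R.posFinset, σ β ∈ R.posFinset ∧ ¬ R.IsPos (R.s i (σ β)) := by
  classical
  by_contra! h
  refine hlen.not_ge (Finset.card_le_card fun β hβ => ?_)
  obtain ⟨hβP, hβs⟩ := Finset.mem_filter.1 hβ
  refine Finset.mem_filter.2 ⟨hβP, fun hpos => hβs (h β hβP ?_)⟩
  exact R.mem_posFinset.2 ⟨(hσ.2 β).2 (R.mem_posFinset.1 hβP).1, hpos⟩

lemma pairing_map_ρ_pos {σ : Equiv.Perm (Fin r → ℚ)} (hσ : σ ∈ R.Aut) {i : Fin r}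
    (hlen : R.len σ < R.len (R.s i * σ)) : 0 < R.pairing i (σ R.ρ) := by
  obtain ⟨β, hβ, hσβ, hs⟩ := R.exists_posFinset_not_isPos_s_of_len_lt hσ hlen
  obtain ⟨q, hq, hσβ_eq⟩ := R.exists_eq_smul_α_of_not_isPos_s hσβ hs
  have hform : 0 < q * R.invForm (σ R.ρ) (R.α i) := by
    rw [← smul_eq_mul, ← map_smul, ← hσβ_eq, R.invForm_map hσ]
    exact R.invForm_ρ_pos hβ
  have h2 : 0 < R.pairing i (σ R.ρ) * R.invForm (R.α i) (R.α i) := by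
    rw [← two_mul_invForm_α]
    exact mul_pos two_pos (pos_of_mul_pos_right hform hq.le)
  exact pos_of_mul_pos_left h2 (R.invForm_self_pos (R.ne_zero_of_mem (R.α_mem i))).le

end RootSystemBase

open RootSystemBase in
theorem weyl_length_increase_left_general {r : ℕ} (R : RootSystemBase r)
    (σ : Equiv.Perm (Fin r → ℚ)) (hσ : σ ∈ R.W) (i : Fin r)
    (c e : Fin r → ℚ)
    (hc : σ R.ρ - R.ρ = -∑ j, c j • R.α j)
    (he : (R.s i * σ) R.ρ - R.ρ = -∑ j, e j • R.α j)
    (hlen : R.len σ < R.len (R.s i * σ)) :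
    (∀ j, c j ≤ e j) ∧ c i < e i := by
  have ht : 0 < R.pairing i (σ R.ρ) := R.pairing_map_ρ_pos (R.W_le_Aut hσ) hlen
  have he_eq : e = c + Pi.single i (R.pairing i (σ R.ρ)) := by
    refine R.linearCombination_α_injective ?_
    rw [map_add, Fintype.linearCombination_apply_single, Fintype.linearCombination_apply,
      Fintype.linearCombination_apply]
    rw [Equiv.Perm.mul_apply, s_apply] at he
    linear_combination (norm := module) he - hc
  refine ⟨fun j => ?_, ?_⟩
  · rw [he_eq, Pi.add_apply]
    have hsingle : 0 ≤ (Pi.single i (R.pairing i (σ R.ρ)) : Fin r → ℚ) j := by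
      rw [Pi.single_apply]
      split_ifs <;> linarith
    linarith
  · rw [he_eq, Pi.add_apply, Pi.single_eq_same]
    linarith

open RootSystemBase in
/-- Let σ be an element of the Weyl group W of a root system with simple roots
α_1, …, α_r, and s_i the simple reflection for α_i.  Write σ(ρ) − ρ = −Σ_j c_j α_j
and s_iσ(ρ) − ρ = −Σ_j e_j α_j with c_j, e_j ≥ 0.  If ℓ(s_i σ) > ℓ(σ), then
e_j ≥ c_j for all j, and moreover e_i > c_i. -/
theorem weyl_length_increase_left {r : ℕ} (R : RootSystemBase r)
    (σ : Equiv.Perm (Fin r → ℚ)) (hσ : σ ∈ R.W) (i : Fin r)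
    (c e : Fin r → ℚ)
    (hc : σ R.ρ - R.ρ = -∑ j, c j • R.α j) (hc0 : ∀ j, 0 ≤ c j)
    (he : (R.s i * σ) R.ρ - R.ρ = -∑ j, e j • R.α j) (he0 : ∀ j, 0 ≤ e j)
    (hlen : R.len σ < R.len (R.s i * σ)) :
    (∀ j, c j ≤ e j) ∧ c i < e i :=
  weyl_length_increase_left_general R σ hσ i c e hc he hlen
end
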